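/- The Heisenberg translation by (τ, v), acting on lifts in ℂ³ as the lower-triangular unipotent matrix T(τ,v) = [[1,0,0],[τ,1,0],[(-|τ|²+iv)/2, -conj(τ), 1]] (suitably normalized), satisfies: H₂ = [[1,0,0],[conj(ω),1,0],[-ω,-ω,1]] is the Heisenberg translation by (-ω, √3), and H₁·H₂² is the vertical translation by (0, 4√3), where ω = (1-i√3)/2 and H₁ = [[1,0,0],[-2conj(ω),1,0],[-2ω-1,2ω,1]]. -/

import Mathlib

/-!
The matrices `heisTransl τ v` realise the Heisenberg group law
`(τ, v) * (σ, w) = (τ + σ, v + w - 2 Im (τ σ̄))`. Reading off entries, `H₂` and `H₁` are the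
translations by `(-ω, √3)` and `(2ω, 2√3)` (using `|ω| = 1`). In `H₁ H₂²` the horizontal parts
`2ω, -ω, -ω` are real multiples of `ω`, so the cross terms `Im (τ σ̄)` vanish: the horizontal
parts cancel and the heights add up to `4√3`.
-/

open Complex Matrix

noncomputable section

def ω : ℂ := (1 - Complex.I * Real.sqrt 3) / 2

/-- The (suitably normalized) lower-triangular unipotent matrix representing the
Heisenberg translation by `(τ, v)` on the lifts of boundary points in `ℂ³`. -/
def heisTransl (τ : ℂ) (v : ℝ) : Matrix (Fin 3) (Fin 3) ℂ :=
  !![1, 0, 0;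
     -(starRingEnd ℂ) τ, 1, 0;
     (-(‖τ‖ : ℂ) ^ 2 + v * Complex.I) / 2, τ, 1]

def H₁ : Matrix (Fin 3) (Fin 3) ℂ :=
  !![1, 0, 0; -2 * (starRingEnd ℂ) ω, 1, 0; -2 * ω - 1, 2 * ω, 1]

def H₂ : Matrix (Fin 3) (Fin 3) ℂ :=
  !![1, 0, 0; (starRingEnd ℂ) ω, 1, 0; -ω, -ω, 1]

theorem heisTransl_mul (τ σ : ℂ) (v w : ℝ) :
    heisTransl τ v * heisTransl σ w =
      heisTransl (τ + σ) (v + w - 2 * (τ * (starRingEnd ℂ) σ).im) := by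
  have him := sub_conj (τ * (starRingEnd ℂ) σ)
  rw [map_mul, conj_conj] at him
  push_cast at him
  generalize (τ * (starRingEnd ℂ) σ).im = c at him ⊢
  ext i j
  fin_cases i <;> fin_cases j <;>
    simp [heisTransl, Matrix.mul_apply, Fin.sum_univ_three, ← mul_conj']
  · ring
  · linear_combination (-1 / 2) * him

theorem norm_ω : ‖ω‖ = 1 := by
  have h3 : Real.sqrt 3 ^ 2 = 3 := Real.sq_sqrt (by norm_num)
  rw [Complex.norm_def, Real.sqrt_eq_one, normSq_apply]
  simp [ω]
  linear_combination (1 / 4) * h3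

theorem H₂_eq_heisTransl : H₂ = heisTransl (-ω) (Real.sqrt 3) := by
  ext i j
  fin_cases i <;> fin_cases j <;> simp [H₂, heisTransl, norm_ω]
  rw [ω]; ring

theorem H₁_eq_heisTransl : H₁ = heisTransl (2 * ω) (2 * Real.sqrt 3) := by
  ext i j
  fin_cases i <;> fin_cases j <;> simp [H₁, heisTransl, norm_ω, map_ofNat]
  rw [ω]; ring

/-- `H₂` is the Heisenberg translation by `(-ω, √3)` and `H₁·H₂²` is the vertical
translation by `(0, 4√3)`. -/
theorem torus_holonomy_translations :
    H₂ = heisTransl (-ω) (Real.sqrt 3) ∧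
    H₁ * H₂ ^ 2 = heisTransl 0 (4 * Real.sqrt 3) := by
  refine ⟨H₂_eq_heisTransl, ?_⟩
  rw [H₁_eq_heisTransl, H₂_eq_heisTransl, sq, ← mul_assoc, heisTransl_mul, heisTransl_mul]
  congr 1
  · ring
  · ring_nf
    simp [mul_conj]

end
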